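/- For the sine-Wiener process ξ(t) = σ·sin(√(2/τ)·W_t) with σ, τ > 0, the covariance function satisfies, for 0 ≤ s ≤ t, E[ξ(t)ξ(s)] = (σ²/2)·exp(−(t−s)/τ)·(1 − exp(−4s/τ)). -/

import Mathlib

/-!
With `a = √(2/τ)`, the product-to-sum identity gives
`ξ(t) ξ(s) = (σ²/2) (cos (a (W_t - W_s)) - cos (a (W_t + W_s)))`.
By independence of increments, `W_t + W_s = (W_t - W_s) + 2 W_s` is again a centred Gaussian, of
variance `t + 3s`, and for a centred Gaussian `Z` the mean of `cos (a Z)` is the real part of its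
characteristic function, `exp (-a² Var Z / 2)`.
-/

open MeasureTheory ProbabilityTheory
open scoped NNReal

lemma integral_cos_gaussianReal (m : ℝ) (v : ℝ≥0) :
    ∫ x, Real.cos x ∂gaussianReal m v = Real.exp (-v / 2) * Real.cos m := by
  have hchar := charFun_gaussianReal (μ := m) (v := v) 1
  simp only [charFun_apply_real, Complex.ofReal_one, one_mul, one_pow, mul_one] at hchar
  have hint : Integrable (fun x : ℝ ↦ Complex.exp (x * Complex.I)) (gaussianReal m v) :=
    .of_bound (by fun_prop) 1 (ae_of_all _ fun x ↦ (Complex.norm_exp_ofReal_mul_I x).le)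
  calc ∫ x, Real.cos x ∂gaussianReal m v
      = (∫ x, Complex.exp (x * Complex.I) ∂gaussianReal m v).re := by
        simp_rw [← RCLike.re_eq_complex_re, ← integral_re hint, RCLike.re_eq_complex_re,
          Complex.exp_ofReal_mul_I_re]
    _ = Real.exp (-v / 2) * Real.cos m := by
        rw [hchar, Complex.exp_re]
        simp [neg_div]

section

variable {Ω : Type*} [MeasurableSpace Ω] {P : Measure Ω}

lemma ProbabilityTheory.HasLaw.of_map_eq {𝓧 : Type*} [MeasurableSpace 𝓧] {X : Ω → 𝓧}
    {ν : Measure 𝓧} [NeZero ν] (h : P.map X = ν) : HasLaw X ν P :=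
  ⟨aemeasurable_of_map_neZero (h ▸ inferInstance), h⟩

lemma integral_cos_const_mul_of_hasLaw_gaussianReal {X : Ω → ℝ} {m : ℝ} {v : ℝ≥0}
    (hX : HasLaw X (gaussianReal m v) P) (c : ℝ) :
    ∫ ω, Real.cos (c * X ω) ∂P = Real.exp (-(c ^ 2 * v) / 2) * Real.cos (c * m) := by
  have h := (gaussianReal_const_mul hX c).integral_comp (f := Real.cos) (by fun_prop)
  rw [integral_cos_gaussianReal] at h
  simpa using h

lemma integrable_cos_comp [IsFiniteMeasure P] {f : Ω → ℝ} (hf : AEMeasurable f P) :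
    Integrable (fun ω ↦ Real.cos (f ω)) P :=
  .of_bound (by fun_prop) 1 (ae_of_all _ fun ω ↦ Real.abs_cos_le_one (f ω))

lemma hasLaw_add_gaussianReal_of_indepFun_sub {X Y : Ω → ℝ} {m₁ m₂ : ℝ} {v₁ v₂ : ℝ≥0}
    (hXY : HasLaw (fun ω ↦ X ω - Y ω) (gaussianReal m₁ v₁) P)
    (hY : HasLaw Y (gaussianReal m₂ v₂) P) (hind : IndepFun (fun ω ↦ X ω - Y ω) Y P) :
    HasLaw (fun ω ↦ X ω + Y ω) (gaussianReal (m₁ + 2 * m₂) (v₁ + 4 * v₂)) P := by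
  have h := (hind.comp measurable_id (measurable_const_mul 2)).hasLaw_add hXY
    (gaussianReal_const_mul hY 2)
  rw [gaussianReal_conv_gaussianReal] at h
  convert h using 2
  · simp only [Pi.add_apply]
    ring
  · congr 2
    ext
    norm_num

end

theorem sine_wiener_covariance_general {Ω : Type*} [MeasurableSpace Ω]
    (μ : Measure Ω) [IsProbabilityMeasure μ]
    (W : ℝ → Ω → ℝ) (σ τ : ℝ) (hτ : 0 < τ)
    (hWlaw : ∀ t : ℝ, 0 ≤ t → μ.map (W t) = gaussianReal 0 t.toNNReal)
    (hWinc : ∀ s t : ℝ, 0 ≤ s → s ≤ t →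
      μ.map (fun ω => W t ω - W s ω) = gaussianReal 0 (t - s).toNNReal)
    (hWindep : ∀ s t : ℝ, 0 ≤ s → s ≤ t →
      IndepFun (fun ω => W t ω - W s ω) (W s) μ)
    (ξ : ℝ → Ω → ℝ)
    (hξ : ∀ t ω, ξ t ω = σ * Real.sin (Real.sqrt (2 / τ) * W t ω)) :
    ∀ s t : ℝ, 0 ≤ s → s ≤ t →
      ∫ ω, ξ t ω * ξ s ω ∂μ =
        σ ^ 2 / 2 * Real.exp (-(t - s) / τ) * (1 - Real.exp (-(4 * s) / τ)) := by
  intro s t hs hst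
  set a := Real.sqrt (2 / τ)
  have ha : a ^ 2 = 2 / τ := Real.sq_sqrt (by positivity)
  have hinc := HasLaw.of_map_eq (hWinc s t hs hst)
  have hsum := hasLaw_add_gaussianReal_of_indepFun_sub hinc (.of_map_eq (hWlaw s hs))
    (hWindep s t hs hst)
  have hprod : ∀ ω, ξ t ω * ξ s ω =
      σ ^ 2 / 2 * (Real.cos (a * (W t ω - W s ω)) - Real.cos (a * (W t ω + W s ω))) := by
    intro ω
    rw [hξ, hξ, mul_sub a, mul_add a, ← Real.two_mul_sin_mul_sin]
    ring
  calc ∫ ω, ξ t ω * ξ s ω ∂μ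
      = σ ^ 2 / 2 * (∫ ω, Real.cos (a * (W t ω - W s ω)) ∂μ
          - ∫ ω, Real.cos (a * (W t ω + W s ω)) ∂μ) := by
        simp_rw [hprod]
        rw [integral_const_mul,
          integral_sub (integrable_cos_comp (hinc.aemeasurable.const_mul a))
            (integrable_cos_comp (hsum.aemeasurable.const_mul a))]
    _ = σ ^ 2 / 2 * Real.exp (-(t - s) / τ) * (1 - Real.exp (-(4 * s) / τ)) := by
        rw [integral_cos_const_mul_of_hasLaw_gaussianReal hinc,
          integral_cos_const_mul_of_hasLaw_gaussianReal hsum]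
        simp only [NNReal.coe_add, NNReal.coe_mul, NNReal.coe_ofNat,
          Real.coe_toNNReal _ (sub_nonneg.2 hst), Real.coe_toNNReal _ hs, ha, mul_zero, add_zero,
          Real.cos_zero, mul_one]
        have hexp₁ : -(2 / τ * (t - s)) / 2 = -(t - s) / τ := by field_simp
        have hexp₂ : -(2 / τ * (t - s + 4 * s)) / 2 = -(t - s) / τ + -(4 * s) / τ := by
          field_simp
          ring
        rw [hexp₁, hexp₂, Real.exp_add]
        ring

/-- Covariance of sine-Wiener noise: for `0 ≤ s ≤ t`,
`E[ξ(t)ξ(s)] = (σ²/2)·exp(−(t−s)/τ)·(1 − exp(−4s/τ))`. -/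
theorem sine_wiener_covariance {Ω : Type*} [MeasurableSpace Ω]
    (μ : Measure Ω) [IsProbabilityMeasure μ]
    (W : ℝ → Ω → ℝ) (σ τ : ℝ) (hσ : 0 < σ) (hτ : 0 < τ)
    (hWmeas : ∀ t, Measurable (W t))
    (hWlaw : ∀ t : ℝ, 0 ≤ t → μ.map (W t) = gaussianReal 0 t.toNNReal)
    (hWinc : ∀ s t : ℝ, 0 ≤ s → s ≤ t →
      μ.map (fun ω => W t ω - W s ω) = gaussianReal 0 (t - s).toNNReal)
    (hWindep : ∀ s t : ℝ, 0 ≤ s → s ≤ t →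
      IndepFun (fun ω => W t ω - W s ω) (W s) μ)
    (ξ : ℝ → Ω → ℝ)
    (hξ : ∀ t ω, ξ t ω = σ * Real.sin (Real.sqrt (2 / τ) * W t ω)) :
    ∀ s t : ℝ, 0 ≤ s → s ≤ t →
      ∫ ω, ξ t ω * ξ s ω ∂μ =
        σ ^ 2 / 2 * Real.exp (-(t - s) / τ) * (1 - Real.exp (-(4 * s) / τ)) :=
  sine_wiener_covariance_general μ W σ τ hτ hWlaw hWinc hWindep ξ hξ
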